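/- Let α ∈ (1,2), σ² > 0, δ > 0 and I > 0. With f₂ := 1 − K, f₃(v) := f₂(2v) and J_{kl} := ∫_ℝ f_k(v)·f_l(v)/|v|^{α+1} dv, the 3×3 real matrix Σ = (1/2)·[[2σ⁴, 0, 0], [0, c_α δ I · J₂₂, c_α δ I · J₂₃], [0, c_α δ I · J₂₃, c_α δ I · J₃₃]] is symmetric and positive definite. -/

import Mathlib

/-!
`Σ` is block diagonal, with blocks `σ⁴` and `(c_α δ I / 2) G`, where `c_α > 0` and `G` is the
Gram matrix of `f₂, f₃` in `L²(|v|^{-(α+1)} dv)`; the entries of `G` are finite because `f₂, f₃`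
are bounded and vanish near `0`, while `|v|^{-(α+1)}` is integrable away from `0`. `G` is positive
definite because no nontrivial combination `a f₂ + b f₃` vanishes on all of `(1, 3)`.
-/

open MeasureTheory Real Matrix

/-- The smooth truncation kernel `K`. -/
noncomputable def K (x : ℝ) : ℝ :=
  if |x| ≤ 1 then 1
  else if |x| < 2 then (1 + Real.exp (1 / (2 - |x|) + 1 / (1 - |x|)))⁻¹
  else 0

/-- `f₂ = 1 - K`. -/
noncomputable def f₂ (v : ℝ) : ℝ := 1 - K v

/-- `f₃ v = f₂ (2 v)`. -/
noncomputable def f₃ (v : ℝ) : ℝ := f₂ (2 * v)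

/-- `c_α = -α(α-1)/(Γ(2-α) cos(πα/2))`. -/
noncomputable def cα (α : ℝ) : ℝ :=
  -(α * (α - 1)) / (Real.Gamma (2 - α) * Real.cos (Real.pi * α / 2))

/-- `J_kl = ∫ f_k f_l/|v|^(α+1) dv`. -/
noncomputable def J (α : ℝ) (fk fl : ℝ → ℝ) : ℝ := ∫ v : ℝ, fk v * fl v / |v| ^ (α + 1)

open Set

lemma K_mem_Icc (x : ℝ) : K x ∈ Icc (0 : ℝ) 1 := by
  unfold K
  split_ifs
  · exact ⟨zero_le_one, le_rfl⟩
  · exact ⟨by positivity, inv_le_one_of_one_le₀ (le_add_of_nonneg_right (exp_pos _).le)⟩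
  · exact ⟨le_rfl, zero_le_one⟩

lemma K_pos {x : ℝ} (hx : |x| < 2) : 0 < K x := by
  unfold K
  split_ifs <;> positivity

lemma K_eq_one {x : ℝ} (hx : |x| ≤ 1) : K x = 1 := if_pos hx

lemma K_eq_zero {x : ℝ} (hx : 2 ≤ |x|) : K x = 0 := by
  rw [K, if_neg (by linarith), if_neg hx.not_gt]

lemma measurable_K : Measurable K := by
  unfold K
  refine Measurable.ite (measurableSet_le (by fun_prop) measurable_const) measurable_const ?_
  exact Measurable.ite (measurableSet_lt (by fun_prop) measurable_const) (by fun_prop)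
    measurable_const

lemma measurable_f₂ : Measurable f₂ := measurable_const.sub measurable_K

lemma measurable_f₃ : Measurable f₃ := measurable_f₂.comp (measurable_const.mul measurable_id)

lemma f₂_mem_Icc (v : ℝ) : f₂ v ∈ Icc (0 : ℝ) 1 := by
  obtain ⟨h0, h1⟩ := K_mem_Icc v
  exact ⟨sub_nonneg.mpr h1, sub_le_self _ h0⟩

lemma f₃_mem_Icc (v : ℝ) : f₃ v ∈ Icc (0 : ℝ) 1 := f₂_mem_Icc _

lemma f₂_eq_zero {v : ℝ} (hv : |v| ≤ 1) : f₂ v = 0 := by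
  rw [f₂, K_eq_one hv, sub_self]

lemma f₂_eq_one {v : ℝ} (hv : 2 ≤ |v|) : f₂ v = 1 := by
  rw [f₂, K_eq_zero hv, sub_zero]

lemma f₃_eq_zero {v : ℝ} (hv : |v| ≤ 1 / 2) : f₃ v = 0 :=
  f₂_eq_zero (by rw [abs_mul, abs_two]; linarith)

lemma f₃_eq_one {v : ℝ} (hv : 1 ≤ |v|) : f₃ v = 1 :=
  f₂_eq_one (by rw [abs_mul, abs_two]; linarith)

lemma abs_mul_le_one_of_mem_Icc {x y : ℝ} (hx : x ∈ Icc (0 : ℝ) 1) (hy : y ∈ Icc (0 : ℝ) 1) :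
    |x * y| ≤ 1 := by
  rw [abs_of_nonneg (mul_nonneg hx.1 hy.1)]
  exact mul_le_one₀ hx.2 hy.1 hy.2

lemma integrableOn_abs_rpow_neg {p r : ℝ} (hp : 1 < p) (hr : 0 < r) :
    IntegrableOn (fun v : ℝ => |v| ^ (-p)) {v | r ≤ |v|} := by
  have hIci : IntegrableOn (fun v : ℝ => |v| ^ (-p)) (Ici r) := by
    rw [integrableOn_Ici_iff_integrableOn_Ioi]
    refine (integrableOn_Ioi_rpow_of_lt (a := -p) (by linarith) hr).congr_fun (fun v hv => ?_)
      measurableSet_Ioi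
    rw [abs_of_pos (hr.trans hv)]
  have hIic : IntegrableOn (fun v : ℝ => |v| ^ (-p)) (Iic (-r)) := by
    rw [← (Measure.measurePreserving_neg volume).integrableOn_comp_preimage
      (Homeomorph.neg ℝ).measurableEmbedding]
    simpa only [Function.comp_def, abs_neg, neg_preimage, neg_Iic, neg_neg] using hIci
  have hset : {v : ℝ | r ≤ |v|} = Iic (-r) ∪ Ici r := by
    ext v
    simp only [mem_ofPred_eq, mem_union, mem_Iic, mem_Ici]
    exact le_abs'
  rw [hset]
  exact hIic.union hIci

lemma integrable_div_abs_rpow {g : ℝ → ℝ} {p r C : ℝ} (hp : 1 < p) (hr : 0 < r)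
    (hg : Measurable g) (hbound : ∀ v, |g v| ≤ C) (hzero : ∀ v, |v| < r → g v = 0) :
    Integrable (fun v => g v / |v| ^ p) := by
  have hmaj : Integrable ({v : ℝ | r ≤ |v|}.indicator fun v => C * |v| ^ (-p)) :=
    (integrable_indicator_iff (measurableSet_le measurable_const (by fun_prop))).mpr
      ((integrableOn_abs_rpow_neg hp hr).const_mul C)
  refine hmaj.mono' (hg.div (by fun_prop)).aestronglyMeasurable (Filter.Eventually.of_forall ?_)
  intro v
  by_cases hv : r ≤ |v|
  · have hpos : 0 < |v| ^ p := rpow_pos_of_pos (hr.trans_le hv) p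
    rw [indicator_of_mem (s := {v : ℝ | r ≤ |v|}) hv, norm_eq_abs, abs_div, abs_of_pos hpos,
      rpow_neg (abs_nonneg v), div_eq_mul_inv]
    exact mul_le_mul_of_nonneg_right (hbound v) (inv_nonneg.mpr hpos.le)
  · rw [indicator_of_notMem (s := {v : ℝ | r ≤ |v|}) hv, hzero v (not_le.mp hv), zero_div,
      norm_zero]

lemma integrable_J_integrand {α : ℝ} (hα : 0 < α) {fk fl : ℝ → ℝ}
    (hk : Measurable fk) (hl : Measurable fl)
    (hk01 : ∀ v, fk v ∈ Icc (0 : ℝ) 1) (hl01 : ∀ v, fl v ∈ Icc (0 : ℝ) 1)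
    (hzero : ∀ v, |v| < 1 / 2 → fk v = 0) :
    Integrable (fun v => fk v * fl v / |v| ^ (α + 1)) :=
  integrable_div_abs_rpow (p := α + 1) (r := 1 / 2) (by linarith) (by norm_num) (hk.mul hl)
    (fun v => abs_mul_le_one_of_mem_Icc (hk01 v) (hl01 v))
    (fun v hv => by rw [hzero v hv, zero_mul])

lemma integral_sq_div_eq_J {α : ℝ} {f g : ℝ → ℝ}
    (hff : Integrable (fun v => f v * f v / |v| ^ (α + 1)))
    (hfg : Integrable (fun v => f v * g v / |v| ^ (α + 1)))
    (hgg : Integrable (fun v => g v * g v / |v| ^ (α + 1))) (a b : ℝ) :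
    ∫ v, (a * f v + b * g v) ^ 2 / |v| ^ (α + 1)
      = a ^ 2 * J α f f + 2 * a * b * J α f g + b ^ 2 * J α g g := by
  have hexpand : ∀ v, (a * f v + b * g v) ^ 2 / |v| ^ (α + 1)
      = a ^ 2 * (f v * f v / |v| ^ (α + 1)) + 2 * a * b * (f v * g v / |v| ^ (α + 1))
        + b ^ 2 * (g v * g v / |v| ^ (α + 1)) := fun v => by ring
  simp_rw [hexpand]
  rw [integral_add _ (hgg.const_mul _), integral_add (hff.const_mul _) (hfg.const_mul _),
    integral_const_mul, integral_const_mul, integral_const_mul]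
  · rfl
  · exact (hff.const_mul _).add (hfg.const_mul _)

lemma integral_sq_div_abs_rpow_pos {h : ℝ → ℝ} {p l u : ℝ} (hl : 0 ≤ l) (hlu : l < u)
    (hint : Integrable (fun v => h v ^ 2 / |v| ^ p)) (hne : ∀ v ∈ Ioo l u, h v ≠ 0) :
    0 < ∫ v, h v ^ 2 / |v| ^ p := by
  refine (integral_pos_iff_support_of_nonneg (fun v => by positivity) hint).mpr ?_
  refine (show 0 < volume (Ioo l u) by simp [hlu]).trans_le (measure_mono fun v hv => ?_)
  have hv0 : 0 < |v| := abs_pos.mpr (hl.trans_lt hv.1).ne'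
  exact (div_pos (sq_pos_of_ne_zero (hne v hv)) (rpow_pos_of_pos hv0 p)).ne'

/-- On `(2, 3)` the combination `a f₂ + b f₃` equals `a + b`; if `a + b = 0`, it equals `-a K` on
`(1, 2)`, where `K > 0`. -/
lemma J_quadratic_form_pos {α : ℝ} (hα : 0 < α) {a b : ℝ} (hab : ¬(a = 0 ∧ b = 0)) :
    0 < a ^ 2 * J α f₂ f₂ + 2 * a * b * J α f₂ f₃ + b ^ 2 * J α f₃ f₃ := by
  have hf₂ : ∀ v, |v| < 1 / 2 → f₂ v = 0 := fun v hv => f₂_eq_zero (by linarith)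
  have hf₃ : ∀ v, |v| < 1 / 2 → f₃ v = 0 := fun v hv => f₃_eq_zero hv.le
  have h22 := integrable_J_integrand hα measurable_f₂ measurable_f₂ f₂_mem_Icc f₂_mem_Icc hf₂
  have h23 := integrable_J_integrand hα measurable_f₂ measurable_f₃ f₂_mem_Icc f₃_mem_Icc hf₂
  have h33 := integrable_J_integrand hα measurable_f₃ measurable_f₃ f₃_mem_Icc f₃_mem_Icc hf₃
  rw [← integral_sq_div_eq_J h22 h23 h33]
  have hint : Integrable (fun v => (a * f₂ v + b * f₃ v) ^ 2 / |v| ^ (α + 1)) := by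
    refine (((h22.const_mul (a ^ 2)).add (h23.const_mul (2 * a * b))).add
      (h33.const_mul (b ^ 2))).congr (Filter.Eventually.of_forall fun v => ?_)
    simp only [Pi.add_apply]
    ring
  by_cases hs : a + b = 0
  · have ha : a ≠ 0 := fun ha => hab ⟨ha, by linarith⟩
    refine integral_sq_div_abs_rpow_pos zero_le_one one_lt_two hint fun v hv => ?_
    have hvabs : |v| = v := abs_of_pos (one_pos.trans hv.1)
    rw [f₃_eq_one (by rw [hvabs]; exact hv.1.le), f₂, show b = -a by linarith]
    have hK := K_pos (x := v) (by rw [hvabs]; exact hv.2)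
    ring_nf
    exact neg_ne_zero.mpr (mul_ne_zero ha hK.ne')
  · refine integral_sq_div_abs_rpow_pos zero_le_two (by norm_num : (2 : ℝ) < 3) hint
      fun v hv => ?_
    have hvabs : |v| = v := abs_of_pos (two_pos.trans hv.1)
    rw [f₂_eq_one (by rw [hvabs]; exact hv.1.le), f₃_eq_one (by rw [hvabs]; linarith [hv.1])]
    simpa using hs

lemma cα_pos {α : ℝ} (hα1 : 1 < α) (hα2 : α < 2) : 0 < cα α := by
  have hΓ : 0 < Gamma (2 - α) := Gamma_pos_of_pos (by linarith)
  have hcos : cos (π * α / 2) < 0 :=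
    cos_neg_of_pi_div_two_lt_of_lt (by nlinarith [pi_pos]) (by nlinarith [pi_pos])
  exact div_pos_of_neg_of_neg (by nlinarith) (mul_neg_of_pos_of_neg hΓ hcos)

lemma isSymm_fin_three_blockDiag (a b c d : ℝ) : (!![a, 0, 0; 0, b, c; 0, c, d]).IsSymm := by
  ext i j
  fin_cases i <;> fin_cases j <;> rfl

lemma posDef_fin_three_blockDiag {a b c d : ℝ} (ha : 0 < a)
    (hQ : ∀ y z : ℝ, ¬(y = 0 ∧ z = 0) → 0 < b * y ^ 2 + 2 * c * y * z + d * z ^ 2) :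
    (!![a, 0, 0; 0, b, c; 0, c, d]).PosDef := by
  refine .of_dotProduct_mulVec_pos (isSymm_fin_three_blockDiag a b c d) fun x hx => ?_
  have hform : star x ⬝ᵥ (!![a, 0, 0; 0, b, c; 0, c, d] *ᵥ x)
      = a * x 0 ^ 2 + (b * x 1 ^ 2 + 2 * c * x 1 * x 2 + d * x 2 ^ 2) := by
    simp only [dotProduct, Pi.star_apply, star_trivial, mulVec, of_apply, cons_val',
      cons_val_fin_one, Fin.sum_univ_three, Fin.isValue, cons_val_zero, cons_val_one, cons_val,
      zero_mul, add_zero, zero_add]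
    ring
  rw [hform]
  by_cases h12 : x 1 = 0 ∧ x 2 = 0
  · have hx0 : x 0 ≠ 0 := fun h0 => hx (by ext i; fin_cases i <;> simp [h0, h12.1, h12.2])
    rw [h12.1, h12.2]
    have := mul_pos ha (sq_pos_of_ne_zero hx0)
    linarith
  · linarith [hQ _ _ h12, mul_nonneg ha.le (sq_nonneg (x 0))]

/-- For `α ∈ (1,2)`, `σ² > 0`, `δ > 0`, `I > 0`, the matrix
`Σ = (1/2)·[[2σ⁴,0,0],[0, cδI J₂₂, cδI J₂₃],[0, cδI J₂₃, cδI J₃₃]]` is symmetric and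
positive definite. -/
theorem stmt5 (α σsq δ I : ℝ) (hα1 : 1 < α) (hα2 : α < 2)
    (hσ : 0 < σsq) (hδ : 0 < δ) (hI : 0 < I) :
    ((1 / 2 : ℝ) •
      !![2 * σsq ^ 2, 0, 0;
         0, cα α * δ * I * J α f₂ f₂, cα α * δ * I * J α f₂ f₃;
         0, cα α * δ * I * J α f₂ f₃, cα α * δ * I * J α f₃ f₃]).IsSymm ∧
    ((1 / 2 : ℝ) •
      !![2 * σsq ^ 2, 0, 0;
         0, cα α * δ * I * J α f₂ f₂, cα α * δ * I * J α f₂ f₃;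
         0, cα α * δ * I * J α f₂ f₃, cα α * δ * I * J α f₃ f₃]).PosDef := by
  refine ⟨(isSymm_fin_three_blockDiag _ _ _ _).smul _, .smul ?_ one_half_pos⟩
  have hk : 0 < cα α * δ * I := by have := cα_pos hα1 hα2; positivity
  refine posDef_fin_three_blockDiag (by positivity) fun y z hyz => ?_
  linarith [mul_pos hk (J_quadratic_form_pos (by linarith : 0 < α) hyz)]
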